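/- Suppose the Markov chain p is irreducible, K_1 (as in the hitting probability theorem) is finite, and limsup_{v} h(v) = 0 along any enumeration exhausting V. Then for a transfinite rotor walk started at a (restarted at a after each escape to infinity) and any transfinite time tau = m*omega + t at which every vertex has been visited finitely often, |h(a) - n_tau(b)/(n_tau(b)+n_tau(c)+m)| <= K_1/(n_tau(b)+n_tau(c)+m). -/

import Mathlib

open scoped BigOperators Classical

/-- `(x, r)` is a rotor walk for the rotor mechanism `(d, succ)`.  Rotor values are
`0`-based: rotor value `j` at `u` means the rotor points to `succ u j`
(corresponding to `u^(j+1)` in `1`-based notation).  At each step the rotor at the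
current particle position is incremented cyclically and the particle moves in the
new rotor direction. -/
def IsRotorWalk {V : Type*} (d : V → ℕ) (succ : V → ℕ → V)
    (x : ℕ → V) (r : ℕ → V → ℕ) : Prop :=
  (∀ v, r 0 v < d v) ∧
  (∀ t, r (t + 1) (x t) = (r t (x t) + 1) % d (x t)) ∧
  (∀ t v, v ≠ x t → r (t + 1) v = r t v) ∧
  (∀ t, x (t + 1) = succ (x t) (r (t + 1) (x t)))

/-- the number of visits of the walk `x` to `v` strictly before time `t` -/
noncomputable def nvisits {V : Type*} (x : ℕ → V) (t : ℕ) (v : V) : ℕ :=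
  ((Finset.range t).filter fun s => x s = v).card

/-- the rotor mechanism `(d, succ)` realizes the transition kernel `p`:
`p u v` is the proportion of the `d u` successors of `u` equal to `v` -/
def Realizes {V : Type*} (d : V → ℕ) (succ : V → ℕ → V) (p : V → V → ℝ) : Prop :=
  (∀ u, 0 < d u) ∧
  ∀ u v, p u v = ((Finset.range (d u)).filter fun i => succ u i = v).card / d u

/-- `hitAux p b c t v` is the probability, for the Markov chain with kernel `p`
started at `v`, of hitting `b` before hitting `c` and within `t` steps. -/
noncomputable def hitAux {V : Type*} (p : V → V → ℝ) (b c : V) : ℕ → V → ℝ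
  | 0, v => if v = b then 1 else 0
  | t + 1, v => if v = b then 1 else if v = c then 0 else ∑' w, p v w * hitAux p b c t w

/-- the hitting probability `h_{b,c}(v) = P_v(T_b < T_c)`, as the monotone limit of the
probabilities of hitting `b` before `c` within `t` steps.  (Taking `b = c` gives the
single-target hitting probability `P_v(T_b < ∞)`.) -/
noncomputable def hitProb {V : Type*} (p : V → V → ℝ) (b c : V) (v : V) : ℝ :=
  ⨆ t, hitAux p b c t v

/-- the escape probability `e_{u,v} = P_u(T_v < T_u^+)`: a first step from `u` to `w`,
then hit `v` before `u`. -/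
noncomputable def escProb {V : Type*} (p : V → V → ℝ) (u v : V) : ℝ :=
  ∑' w, p u w * hitProb p v u w

/-- irreducibility of the kernel: any vertex can be reached from any other by a path of
positive-probability steps -/
def IrreducibleKernel {V : Type*} (p : V → V → ℝ) : Prop :=
  ∀ u v : V, ∃ (n : ℕ) (f : ℕ → V), f 0 = u ∧ f n = v ∧ ∀ i < n, 0 < p (f i) (f (i + 1))

/-- A transfinite rotor walk started at `a`: a (finite or infinite) sequence of rotor
walks `X m`, each started at `a`; every walk strictly before stage `M` is transient and
the next walk starts from its limiting rotor configuration; if `M` is finite, the walk at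
stage `M` is recurrent (so the transfinite walk stops evolving there). -/
structure TransRW {V : Type*} (d : V → ℕ) (succ : V → ℕ → V) (a : V) where
  M : ℕ∞
  X : ℕ → ℕ → V
  R : ℕ → ℕ → V → ℕ
  walk : ∀ m : ℕ, (m : ℕ∞) ≤ M → IsRotorWalk d succ (X m) (R m) ∧ X m 0 = a
  transient : ∀ m : ℕ, (m : ℕ∞) < M → ∀ v, {t | X m t = v}.Finite
  limit : ∀ m : ℕ, (m : ℕ∞) < M → ∀ v, ∃ T, ∀ t, T ≤ t → R m t v = R (m + 1) 0 v
  last_recurrent : ∀ m : ℕ, (m : ℕ∞) = M → ∀ v, {t | X m t = v}.Infinite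

/-- `ntau W m t v` is the number of visits to `v` before the transfinite time
`τ = m·ω + t`: all visits during the first `m` (completed) walks, plus the visits of the
`m`-th walk before time `t`. -/
noncomputable def ntau {V : Type*} {d : V → ℕ} {succ : V → ℕ → V} {a : V}
    (W : TransRW d succ a) (m t : ℕ) (v : V) : ℕ :=
  (∑ m' ∈ Finset.range m, {s | W.X m' s = v}.ncard) + nvisits (W.X m) t v


/-!
Along a rotor walk the increments of `h` telescope: `h (x T) - h (x 0)` is the sum over the
vertices `u` of the values `h (u^j) - h u` at the rotor positions `j` used at `u` so far.  At the
sinks `b` and `c` the only rotor position points to `a`, which contributes `n(b) (h a - 1)` and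
`n(c) h a`.  Elsewhere `h` is harmonic, so a full turn of the rotor contributes nothing and the
contribution of `u` is at most `½ ∑_j |h (u^j) - h u|`.  For a transient walk `h (x T) → 0`,
which gives the same identity for the total visit counts, with left side `-h a`.  Each stage of
the transfinite walk starts from the limiting rotors of the previous one, so the rotor sums of the
stages concatenate; adding the identities of the stages gives
`(n(b) + n(c) + m) h a - n(b) = h (x_τ) - h a - (interior discrepancy)`, which is at most `K₁`.
-/

open Filter Finset

section HittingProbability

variable {V : Type*} {d : V → ℕ} {succ : V → ℕ → V} {p : V → V → ℝ}

lemma Realizes.tsum_mul (hreal : Realizes d succ p) (u : V) (f : V → ℝ) :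
    ∑' w, p u w * f w = (∑ j ∈ range (d u), f (succ u j)) / d u := by
  have hsupp : ∀ w ∉ (range (d u)).image (succ u), p u w * f w = 0 := by
    intro w hw
    have hempty : (range (d u)).filter (fun i => succ u i = w) = ∅ :=
      filter_eq_empty_iff.2 fun i hi hiw => hw (mem_image.2 ⟨i, hi, hiw⟩)
    rw [hreal.2, hempty, card_empty, Nat.cast_zero, zero_div, zero_mul]
  rw [tsum_eq_sum hsupp, sum_div, sum_comp (fun w => f w / d u) (succ u)]
  refine sum_congr rfl fun w _ => ?_
  rw [hreal.2, nsmul_eq_mul]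
  ring

lemma Realizes.average_mem_Icc (hreal : Realizes d succ p) (u : V) {g : V → ℝ}
    (hg : ∀ v, g v ∈ Set.Icc (0 : ℝ) 1) :
    (∑ j ∈ range (d u), g (succ u j)) / d u ∈ Set.Icc (0 : ℝ) 1 := by
  have hd : (0 : ℝ) < d u := by exact_mod_cast hreal.1 u
  refine ⟨div_nonneg (sum_nonneg fun j _ => (hg _).1) hd.le, (div_le_one hd).2 ?_⟩
  calc ∑ j ∈ range (d u), g (succ u j) ≤ ∑ _j ∈ range (d u), (1 : ℝ) :=
        sum_le_sum fun j _ => (hg _).2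
    _ = d u := by simp

lemma hitAux_succ_of_ne (hreal : Realizes d succ p) {b c u : V} (hub : u ≠ b) (huc : u ≠ c)
    (t : ℕ) : hitAux p b c (t + 1) u = (∑ j ∈ range (d u), hitAux p b c t (succ u j)) / d u := by
  rw [hitAux, if_neg hub, if_neg huc, hreal.tsum_mul]

lemma hitAux_mem_Icc (hreal : Realizes d succ p) (b c : V) (t : ℕ) (v : V) :
    hitAux p b c t v ∈ Set.Icc (0 : ℝ) 1 := by
  induction t generalizing v with
  | zero => rw [hitAux]; split_ifs <;> norm_num
  | succ t ih =>
    by_cases hvb : v = b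
    · simp [hitAux, hvb]
    by_cases hvc : v = c
    · simp only [hitAux, if_neg hvb, if_pos hvc]
      norm_num
    rw [hitAux_succ_of_ne hreal hvb hvc]
    exact hreal.average_mem_Icc v ih

lemma hitAux_le_succ (hreal : Realizes d succ p) (b c : V) (t : ℕ) (v : V) :
    hitAux p b c t v ≤ hitAux p b c (t + 1) v := by
  induction t generalizing v with
  | zero =>
    by_cases hvb : v = b
    · simp [hitAux, hvb]
    · simpa [hitAux, hvb] using (hitAux_mem_Icc hreal b c 1 v).1
  | succ t ih =>
    by_cases hvb : v = b
    · simp [hitAux, hvb]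
    by_cases hvc : v = c
    · simp only [hitAux, if_neg hvb, if_pos hvc, le_refl]
    rw [hitAux_succ_of_ne hreal hvb hvc, hitAux_succ_of_ne hreal hvb hvc]
    gcongr
    exact ih _

lemma tendsto_hitAux_hitProb (hreal : Realizes d succ p) (b c v : V) :
    Tendsto (fun t => hitAux p b c t v) atTop (nhds (hitProb p b c v)) :=
  tendsto_atTop_ciSup (monotone_nat_of_le_succ fun t => hitAux_le_succ hreal b c t v)
    ⟨1, Set.forall_mem_range.2 fun t => (hitAux_mem_Icc hreal b c t v).2⟩

lemma hitProb_mem_Icc (hreal : Realizes d succ p) (b c v : V) :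
    hitProb p b c v ∈ Set.Icc (0 : ℝ) 1 :=
  isClosed_Icc.mem_of_tendsto (tendsto_hitAux_hitProb hreal b c v)
    (Eventually.of_forall fun t => hitAux_mem_Icc hreal b c t v)

lemma hitProb_left (b c : V) : hitProb p b c b = 1 := by
  have hb : ∀ t, hitAux p b c t b = 1 := fun t => by cases t <;> simp [hitAux]
  simp [hitProb, hb]

lemma hitProb_right {b c : V} (hbc : b ≠ c) : hitProb p b c c = 0 := by
  have hc : ∀ t, hitAux p b c t c = 0 := fun t => by cases t <;> simp [hitAux, hbc.symm]
  simp [hitProb, hc]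

lemma sum_sub_hitProb_eq_zero (hreal : Realizes d succ p) {b c u : V} (hub : u ≠ b)
    (huc : u ≠ c) : ∑ j ∈ range (d u), (hitProb p b c (succ u j) - hitProb p b c u) = 0 := by
  have hlim := (tendsto_add_atTop_iff_nat 1).2 (tendsto_hitAux_hitProb hreal b c u)
  simp only [hitAux_succ_of_ne hreal hub huc] at hlim
  have hmean := tendsto_nhds_unique hlim
    ((tendsto_finsetSum _ fun j _ => tendsto_hitAux_hitProb hreal b c (succ u j)).div_const _)
  have hd : (d u : ℝ) ≠ 0 := by exact_mod_cast (hreal.1 u).ne'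
  rw [eq_div_iff hd] at hmean
  rw [sum_sub_distrib, sum_const, card_range, nsmul_eq_mul, ← hmean]
  ring

end HittingProbability

section RotorSum

variable {M : Type*} [AddCommMonoid M]

/-- The values of `e` at the next `n` positions of a rotor at position `ρ` turning modulo `D`. -/
def rotorSum (e : ℕ → M) (D ρ n : ℕ) : M :=
  ∑ i ∈ range n, e ((ρ + 1 + i) % D)

variable (e : ℕ → M) (D : ℕ)

@[simp]
lemma rotorSum_zero (ρ : ℕ) : rotorSum e D ρ 0 = 0 := rfl

lemma rotorSum_succ (ρ n : ℕ) :
    rotorSum e D ρ (n + 1) = rotorSum e D ρ n + e ((ρ + 1 + n) % D) :=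
  sum_range_succ _ _

lemma rotorSum_add (ρ k n : ℕ) :
    rotorSum e D ρ (k + n) = rotorSum e D ρ k + rotorSum e D (ρ + k) n := by
  rw [rotorSum, sum_range_add]
  congr 1
  exact sum_congr rfl fun i _ => by rw [add_right_comm ρ k 1, add_assoc _ k i, add_assoc]

lemma rotorSum_congr_mod {ρ ρ' : ℕ} (h : ρ % D = ρ' % D) (n : ℕ) :
    rotorSum e D ρ n = rotorSum e D ρ' n :=
  sum_congr rfl fun i _ => by rw [add_assoc, add_assoc, Nat.add_mod, h, ← Nat.add_mod]

lemma rotorSum_one (ρ n : ℕ) : rotorSum e 1 ρ n = n • e 0 := by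
  simp [rotorSum, Nat.mod_one]

lemma sum_range_add_mod (k : ℕ) : ∑ i ∈ range D, e ((k + i) % D) = ∑ j ∈ range D, e j := by
  have hIco := sum_Ico_eq_sum_range (fun j => e (j % D)) k (k + D)
  rw [Nat.add_sub_cancel_left] at hIco
  rw [← hIco, Finset.sum]
  change (Multiset.map (e ∘ (· % D)) _).sum = _
  rw [← Multiset.map_map, show (Ico k (k + D)).val = Multiset.Ico k (k + D) from rfl,
    Nat.multiset_Ico_map_mod]
  rfl

lemma rotorSum_period (ρ : ℕ) : rotorSum e D ρ D = ∑ j ∈ range D, e j :=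
  sum_range_add_mod e D (ρ + 1)

lemma rotorSum_sum_add {K : ℕ} (ρ n : ℕ → ℕ) (hρ : ∀ k < K, ρ (k + 1) % D = (ρ k + n k) % D)
    (n' : ℕ) : rotorSum e D (ρ 0) (∑ k ∈ range K, n k + n') =
      ∑ k ∈ range K, rotorSum e D (ρ k) (n k) + rotorSum e D (ρ K) n' := by
  induction K generalizing n' with
  | zero => simp
  | succ K ih =>
    rw [sum_range_succ, add_assoc, ih (fun k hk => hρ k (Nat.lt_succ_of_lt hk)), rotorSum_add,
      rotorSum_congr_mod e D (hρ K K.lt_succ_self).symm, sum_range_succ, add_assoc]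

end RotorSum

lemma abs_rotorSum_le (e : ℕ → ℝ) {D : ℕ} (hD : 0 < D) (he : ∑ j ∈ range D, e j = 0)
    (ρ n : ℕ) : |rotorSum e D ρ n| ≤ (1 / 2) * ∑ j ∈ range D, |e j| := by
  have hper : Function.Periodic (rotorSum e D ρ) D := fun n => by
    rw [rotorSum_add, rotorSum_period, he, add_zero]
  -- a full turn splits into the first `s` steps and the rest, whose sums cancel
  rw [← hper.map_mod_nat]
  set s := n % D
  have hsD : s + (D - s) = D := Nat.add_sub_cancel' (Nat.mod_lt n hD).le
  have hcancel : rotorSum e D ρ s + rotorSum e D (ρ + s) (D - s) = 0 := by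
    rw [← rotorSum_add, hsD, rotorSum_period, he]
  have habs : rotorSum (|e ·|) D ρ s + rotorSum (|e ·|) D (ρ + s) (D - s) =
      ∑ j ∈ range D, |e j| := by
    rw [← rotorSum_add, hsD, rotorSum_period]
  have h₁ : |rotorSum e D ρ s| ≤ rotorSum (|e ·|) D ρ s := abs_sum_le_sum_abs _ _
  have h₂ : |rotorSum e D (ρ + s) (D - s)| ≤ rotorSum (|e ·|) D (ρ + s) (D - s) :=
    abs_sum_le_sum_abs _ _
  have hsymm : |rotorSum e D ρ s| = |rotorSum e D (ρ + s) (D - s)| := by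
    rw [eq_neg_of_add_eq_zero_left hcancel, abs_neg]
  linarith

section RotorWalk

variable {V : Type*} {d : V → ℕ} {succ : V → ℕ → V} {x : ℕ → V} {r : ℕ → V → ℕ}

lemma nvisits_succ (x : ℕ → V) (T : ℕ) (v : V) :
    nvisits x (T + 1) v = nvisits x T v + if x T = v then 1 else 0 := by
  rw [nvisits, range_add_one, filter_insert]
  split_ifs with hT
  · exact card_insert_of_notMem fun hmem => by simpa using (mem_filter.1 hmem).1
  · rfl

lemma nvisits_eq_zero {T : ℕ} {v : V} (hv : ∀ s < T, x s ≠ v) : nvisits x T v = 0 :=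
  card_eq_zero.2 <| filter_eq_empty_iff.2 fun s hs => hv s (mem_range.1 hs)

lemma eventually_nvisits_eq_ncard {v : V} (hfin : {s | x s = v}.Finite) :
    ∀ᶠ T in atTop, nvisits x T v = {s | x s = v}.ncard := by
  obtain ⟨N, hN⟩ := hfin.bddAbove
  refine eventually_atTop.2 ⟨N + 1, fun T hT => ?_⟩
  rw [nvisits, Set.ncard_eq_toFinset_card _ hfin]
  congr 1
  ext s
  simp only [mem_filter, mem_range, Set.Finite.mem_toFinset, Set.mem_ofPred_eq,
    and_iff_right_iff_imp]
  exact fun hs => by have := hN hs; omega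

lemma tendsto_cofinite_of_finite_visits (htrans : ∀ v, {s | x s = v}.Finite) :
    Tendsto x atTop cofinite :=
  Nat.cofinite_eq_atTop ▸
    Tendsto.cofinite_of_finite_preimage_singleton fun v => (htrans v).to_subtype

lemma IsRotorWalk.rotor_eq (hw : IsRotorWalk d succ x r) (T : ℕ) (v : V) :
    r T v = (r 0 v + nvisits x T v) % d v := by
  induction T generalizing v with
  | zero => exact (Nat.mod_eq_of_lt (hw.1 v)).symm
  | succ T ih =>
    by_cases hv : v = x T
    · subst hv
      rw [hw.2.1 T, ih, Nat.mod_add_mod, nvisits_succ, if_pos rfl, add_assoc]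
    · rw [hw.2.2.1 T v hv, ih, nvisits_succ, if_neg (Ne.symm hv), add_zero]

lemma IsRotorWalk.next_eq (hw : IsRotorWalk d succ x r) (T : ℕ) :
    x (T + 1) = succ (x T) ((r 0 (x T) + 1 + nvisits x T (x T)) % d (x T)) := by
  rw [hw.2.2.2 T, hw.2.1 T, hw.rotor_eq, Nat.mod_add_mod, add_right_comm]

/-- The contribution of `u` to the telescoping sum of the increments of `f` along a rotor walk
that has visited `u` exactly `n u` times, starting from the rotor configuration `ρ`. -/
def rotorDiscrepancy (d : V → ℕ) (succ : V → ℕ → V) (f : V → ℝ) (ρ n : V → ℕ) (u : V) : ℝ :=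
  rotorSum (fun j => f (succ u j) - f u) (d u) (ρ u) (n u)

lemma IsRotorWalk.rotorDiscrepancy_succ (hw : IsRotorWalk d succ x r) (f : V → ℝ) (T : ℕ)
    (u : V) : rotorDiscrepancy d succ f (r 0) (nvisits x (T + 1)) u =
      rotorDiscrepancy d succ f (r 0) (nvisits x T) u +
        if x T = u then f (x (T + 1)) - f (x T) else 0 := by
  rw [rotorDiscrepancy, nvisits_succ]
  split_ifs with hu
  · subst hu
    rw [rotorSum_succ, hw.next_eq]
    rfl
  · rw [add_zero, add_zero]
    rfl

lemma IsRotorWalk.sub_eq_sum_rotorDiscrepancy (hw : IsRotorWalk d succ x r) (f : V → ℝ)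
    (T : ℕ) {F : Finset V} (hF : ∀ s < T, x s ∈ F) :
    f (x T) - f (x 0) = ∑ u ∈ F, rotorDiscrepancy d succ f (r 0) (nvisits x T) u := by
  induction T with
  | zero => simp [rotorDiscrepancy, nvisits]
  | succ T ih =>
    simp only [hw.rotorDiscrepancy_succ, sum_add_distrib, sum_ite_eq, if_pos (hF T T.lt_succ_self)]
    rw [← ih fun s hs => hF s (Nat.lt_succ_of_lt hs)]
    ring

end RotorWalk

section Sinks

variable {V : Type*} {d : V → ℕ} {succ : V → ℕ → V} {x : ℕ → V} {r : ℕ → V → ℕ}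
  {f : V → ℝ} {a b c : V}

noncomputable def interiorDiscrepancy (d : V → ℕ) (succ : V → ℕ → V) (f : V → ℝ) (b c : V)
    (ρ n : V → ℕ) (u : V) : ℝ :=
  if u = b ∨ u = c then 0 else rotorDiscrepancy d succ f ρ n u

noncomputable def discrepancyBound (d : V → ℕ) (succ : V → ℕ → V) (f : V → ℝ) (b c u : V) : ℝ :=
  if u = b ∨ u = c then 0 else (1 / 2) * ∑ j ∈ range (d u), |f (succ u j) - f u|

lemma abs_interiorDiscrepancy_le (hd : ∀ u, 0 < d u)
    (hharm : ∀ u, u ≠ b → u ≠ c → ∑ j ∈ range (d u), (f (succ u j) - f u) = 0)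
    (ρ n : V → ℕ) (u : V) :
    |interiorDiscrepancy d succ f b c ρ n u| ≤ discrepancyBound d succ f b c u := by
  rw [interiorDiscrepancy, discrepancyBound]
  split_ifs with hu
  · simp
  · rw [not_or] at hu
    exact abs_rotorSum_le _ (hd u) (hharm u hu.1 hu.2) _ _

lemma summable_interiorDiscrepancy (hd : ∀ u, 0 < d u)
    (hharm : ∀ u, u ≠ b → u ≠ c → ∑ j ∈ range (d u), (f (succ u j) - f u) = 0)
    (hB : Summable (discrepancyBound d succ f b c)) (ρ n : V → ℕ) :
    Summable (interiorDiscrepancy d succ f b c ρ n) :=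
  hB.of_norm_bounded fun u => abs_interiorDiscrepancy_le hd hharm ρ n u

lemma Realizes.hasSum_discrepancyBound {p : V → V → ℝ} (hreal : Realizes d succ p)
    (hsum : Summable fun uv : V × V =>
      if uv.1 = b ∨ uv.1 = c then 0 else (d uv.1 : ℝ) * p uv.1 uv.2 * |f uv.1 - f uv.2|) :
    HasSum (discrepancyBound d succ f b c) ((1 / 2) * ∑' uv : V × V,
      if uv.1 = b ∨ uv.1 = c then 0 else (d uv.1 : ℝ) * p uv.1 uv.2 * |f uv.1 - f uv.2|) := by
  have hrow : ∀ u, discrepancyBound d succ f b c u = (1 / 2) * ∑' v,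
      if u = b ∨ u = c then 0 else (d u : ℝ) * p u v * |f u - f v| := by
    intro u
    rw [discrepancyBound]
    split_ifs with hu
    · simp
    · have hdu : (d u : ℝ) ≠ 0 := by exact_mod_cast (hreal.1 u).ne'
      rw [tsum_congr fun v => mul_assoc _ _ _, tsum_mul_left,
        hreal.tsum_mul u (fun v => |f u - f v|), mul_div_cancel₀ _ hdu]
      exact congrArg _ (sum_congr rfl fun j _ => abs_sub_comm _ _)
  rw [funext hrow]
  exact (hsum.hasSum.prod_fiberwise fun u => (hsum.prod_factor u).hasSum).mul_left (1 / 2)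

lemma IsRotorWalk.sub_eq (hw : IsRotorWalk d succ x r) (hdb : d b = 1) (hdc : d c = 1)
    (hsb : succ b 0 = a) (hsc : succ c 0 = a) (hbc : b ≠ c) (f : V → ℝ) (T : ℕ) :
    f (x T) - f (x 0) = nvisits x T b * (f a - f b) + nvisits x T c * (f a - f c) +
      ∑' u, interiorDiscrepancy d succ f b c (r 0) (nvisits x T) u := by
  set F : Finset V := insert b (insert c ((range T).image x))
  have hvisit : ∀ s < T, x s ∈ F := fun s hs =>
    mem_insert_of_mem (mem_insert_of_mem (mem_image_of_mem x (mem_range.2 hs)))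
  have hsupp : ∀ u ∉ F, interiorDiscrepancy d succ f b c (r 0) (nvisits x T) u = 0 := by
    intro u hu
    have hn : nvisits x T u = 0 := nvisits_eq_zero fun s hs hsu => hu (hsu ▸ hvisit s hs)
    simp [interiorDiscrepancy, rotorDiscrepancy, hn]
  have hsplit : ∀ u, rotorDiscrepancy d succ f (r 0) (nvisits x T) u =
      interiorDiscrepancy d succ f b c (r 0) (nvisits x T) u +
        (if b = u then nvisits x T b * (f a - f b) else 0) +
        (if c = u then nvisits x T c * (f a - f c) else 0) := by
    intro u
    by_cases hub : b = u
    · subst hub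
      simp [interiorDiscrepancy, rotorDiscrepancy, hbc, hbc.symm, hdb, hsb, rotorSum_one]
    by_cases huc : c = u
    · subst huc
      simp [interiorDiscrepancy, rotorDiscrepancy, hbc, hbc.symm, hdc, hsc, rotorSum_one]
    simp [interiorDiscrepancy, Ne.symm hub, Ne.symm huc, hub, huc]
  rw [hw.sub_eq_sum_rotorDiscrepancy f T hvisit, tsum_eq_sum hsupp]
  have hbF : b ∈ F := mem_insert_self b _
  have hcF : c ∈ F := mem_insert_of_mem (mem_insert_self c _)
  simp only [hsplit, sum_add_distrib, sum_ite_eq, if_pos hbF, if_pos hcF]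
  ring

lemma IsRotorWalk.neg_eq_of_transient (hw : IsRotorWalk d succ x r) (hd : ∀ u, 0 < d u)
    (hdb : d b = 1) (hdc : d c = 1) (hsb : succ b 0 = a) (hsc : succ c 0 = a) (hbc : b ≠ c)
    (htrans : ∀ v, {s | x s = v}.Finite) (hlim : Tendsto f cofinite (nhds 0))
    (hharm : ∀ u, u ≠ b → u ≠ c → ∑ j ∈ range (d u), (f (succ u j) - f u) = 0)
    (hB : Summable (discrepancyBound d succ f b c)) :
    -f (x 0) = {s | x s = b}.ncard * (f a - f b) + {s | x s = c}.ncard * (f a - f c) +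
      ∑' u, interiorDiscrepancy d succ f b c (r 0) (fun v => {s | x s = v}.ncard) u := by
  have hcount : ∀ v, Tendsto (fun T => (nvisits x T v : ℝ)) atTop
      (nhds ({s | x s = v}.ncard : ℝ)) := fun v =>
    tendsto_const_nhds.congr' <| (eventually_nvisits_eq_ncard (htrans v)).mono fun T hT => by
      simp only [hT]
  have hinterior :
      Tendsto (fun T => ∑' u, interiorDiscrepancy d succ f b c (r 0) (nvisits x T) u) atTop
        (nhds (∑' u, interiorDiscrepancy d succ f b c (r 0) (fun v => {s | x s = v}.ncard) u)) :=
    tendsto_tsum_of_dominated_convergence hB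
      (fun u => tendsto_const_nhds.congr' <| (eventually_nvisits_eq_ncard (htrans u)).mono
        fun T hT => by simp only [interiorDiscrepancy, rotorDiscrepancy, hT])
      (Eventually.of_forall fun T u => abs_interiorDiscrepancy_le hd hharm _ _ u)
  have hlhs : Tendsto (fun T => f (x T) - f (x 0)) atTop (nhds (-f (x 0))) := by
    simpa using (hlim.comp (tendsto_cofinite_of_finite_visits htrans)).sub_const (f (x 0))
  simp only [hw.sub_eq hdb hdc hsb hsc hbc] at hlhs
  exact tendsto_nhds_unique hlhs
    (((hcount b).mul_const _).add ((hcount c).mul_const _) |>.add hinterior)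

end Sinks

namespace TransRW

variable {V : Type*} {d : V → ℕ} {succ : V → ℕ → V} {a : V} (W : TransRW d succ a)

lemma rotor_zero_succ {m : ℕ} (hm : (m : ℕ∞) < W.M) (u : V) :
    W.R (m + 1) 0 u = (W.R m 0 u + {s | W.X m s = u}.ncard) % d u := by
  obtain ⟨T₀, hT₀⟩ := W.limit m hm u
  obtain ⟨T₁, hT₁⟩ := eventually_atTop.1 (eventually_nvisits_eq_ncard (W.transient m hm u))
  rw [← hT₀ (max T₀ T₁) (le_max_left _ _), (W.walk m hm.le).1.rotor_eq,
    hT₁ _ (le_max_right _ _)]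

lemma interiorDiscrepancy_ntau (f : V → ℝ) (b c : V) {m : ℕ} (hm : (m : ℕ∞) ≤ W.M) (t : ℕ)
    (u : V) : interiorDiscrepancy d succ f b c (W.R 0 0) (ntau W m t) u =
      ∑ k ∈ range m,
        interiorDiscrepancy d succ f b c (W.R k 0) (fun v => {s | W.X k s = v}.ncard) u +
      interiorDiscrepancy d succ f b c (W.R m 0) (nvisits (W.X m) t) u := by
  simp only [interiorDiscrepancy, rotorDiscrepancy]
  split_ifs
  · simp
  · refine rotorSum_sum_add _ _ (fun k => W.R k 0 u) (fun k => {s | W.X k s = u}.ncard)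
      (fun k hk => ?_) _
    rw [W.rotor_zero_succ (lt_of_lt_of_le (by exact_mod_cast hk) hm), Nat.mod_mod]

variable {f : V → ℝ} {b c : V} (hd : ∀ u, 0 < d u) (hdb : d b = 1) (hdc : d c = 1)
  (hsb : succ b 0 = a) (hsc : succ c 0 = a) (hbc : b ≠ c) (hb1 : f b = 1) (hc0 : f c = 0)
  (hlim : Tendsto f cofinite (nhds 0))
  (hharm : ∀ u, u ≠ b → u ≠ c → ∑ j ∈ range (d u), (f (succ u j) - f u) = 0)
  (hB : Summable (discrepancyBound d succ f b c))
include hd hdb hdc hsb hsc hbc hb1 hc0 hlim hharm hB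

lemma sum_stages_eq {m : ℕ} (hm : (m : ℕ∞) ≤ W.M) :
    -(m * f a) = (∑ k ∈ range m, ({s | W.X k s = b}.ncard : ℝ)) * (f a - 1) +
      (∑ k ∈ range m, ({s | W.X k s = c}.ncard : ℝ)) * f a +
      ∑ k ∈ range m,
        ∑' u, interiorDiscrepancy d succ f b c (W.R k 0) (fun v => {s | W.X k s = v}.ncard) u := by
  have hstage : ∀ k ∈ range m, -f a = ({s | W.X k s = b}.ncard : ℝ) * (f a - 1) +
      {s | W.X k s = c}.ncard * f a +
      ∑' u, interiorDiscrepancy d succ f b c (W.R k 0) (fun v => {s | W.X k s = v}.ncard) u := by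
    intro k hk
    have hkM : (k : ℕ∞) < W.M := lt_of_lt_of_le (by exact_mod_cast mem_range.1 hk) hm
    have h := (W.walk k hkM.le).1.neg_eq_of_transient hd hdb hdc hsb hsc hbc
      (W.transient k hkM) hlim hharm hB
    rwa [(W.walk k hkM.le).2, hb1, hc0, sub_zero] at h
  have hsum := sum_congr rfl hstage
  simp only [sum_const, card_range, nsmul_eq_mul, sum_add_distrib, ← sum_mul] at hsum
  linarith

lemma mul_sub_eq {m : ℕ} (hm : (m : ℕ∞) ≤ W.M) (t : ℕ) :
    ((ntau W m t b : ℝ) + ntau W m t c + m) * f a - ntau W m t b =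
      f (W.X m t) - f a - ∑' u, interiorDiscrepancy d succ f b c (W.R 0 0) (ntau W m t) u := by
  have hcur := (W.walk m hm).1.sub_eq hdb hdc hsb hsc hbc f t
  rw [(W.walk m hm).2, hb1, hc0, sub_zero] at hcur
  have hsummable := summable_interiorDiscrepancy hd hharm hB
  have hsplit : ∑' u, interiorDiscrepancy d succ f b c (W.R 0 0) (ntau W m t) u =
      ∑ k ∈ range m,
        ∑' u, interiorDiscrepancy d succ f b c (W.R k 0) (fun v => {s | W.X k s = v}.ncard) u +
      ∑' u, interiorDiscrepancy d succ f b c (W.R m 0) (nvisits (W.X m) t) u := by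
    rw [tsum_congr (W.interiorDiscrepancy_ntau f b c hm t),
      (summable_sum fun k _ => hsummable _ _).tsum_add (hsummable _ _),
      Summable.tsum_finsetSum fun k _ => hsummable _ _]
  have hstages := W.sum_stages_eq hd hdb hdc hsb hsc hbc hb1 hc0 hlim hharm hB hm
  simp only [ntau, Nat.cast_add, Nat.cast_sum]
  linear_combination -hstages - hcur + hsplit

lemma abs_mul_sub_le (h01 : ∀ v, f v ∈ Set.Icc (0 : ℝ) 1) {m : ℕ} (hm : (m : ℕ∞) ≤ W.M)
    (t : ℕ) : |((ntau W m t b : ℝ) + ntau W m t c + m) * f a - ntau W m t b| ≤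
      1 + ∑' u, discrepancyBound d succ f b c u := by
  rw [W.mul_sub_eq hd hdb hdc hsb hsc hbc hb1 hc0 hlim hharm hB hm t]
  have hstep : |f (W.X m t) - f a| ≤ 1 := by
    obtain ⟨hx₀, hx₁⟩ := h01 (W.X m t)
    obtain ⟨ha₀, ha₁⟩ := h01 a
    exact abs_sub_le_iff.2 ⟨by linarith, by linarith⟩
  have hsummable := summable_interiorDiscrepancy hd hharm hB (W.R 0 0) (ntau W m t)
  have hinterior : |∑' u, interiorDiscrepancy d succ f b c (W.R 0 0) (ntau W m t) u| ≤
      ∑' u, discrepancyBound d succ f b c u :=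
    le_trans (by simpa only [Real.norm_eq_abs] using norm_tsum_le_tsum_norm hsummable.norm)
      (hsummable.abs.tsum_le_tsum (abs_interiorDiscrepancy_le hd hharm _ _) hB)
  exact (abs_sub _ _).trans (add_le_add hstep hinterior)

end TransRW

theorem transfinite_hitting_prob_general {V : Type*}
    (d : V → ℕ) (succ : V → ℕ → V) (p : V → V → ℝ)
    (hreal : Realizes d succ p)
    (a b c : V) (hbc : b ≠ c)
    (hdb : d b = 1) (hdc : d c = 1) (hsb : succ b 0 = a) (hsc : succ c 0 = a)
    (h : V → ℝ) (hh : h = hitProb p b c)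
    (hlim : Filter.Tendsto h Filter.cofinite (nhds 0))
    (K₁ : ℝ)
    (hsum : Summable fun uv : V × V =>
      if uv.1 = b ∨ uv.1 = c then 0
      else (d uv.1 : ℝ) * p uv.1 uv.2 * |h uv.1 - h uv.2|)
    (hK₁ : K₁ = 1 + (1 / 2) * ∑' uv : V × V,
      if uv.1 = b ∨ uv.1 = c then 0
      else (d uv.1 : ℝ) * p uv.1 uv.2 * |h uv.1 - h uv.2|)
    (W : TransRW d succ a)
    (m t : ℕ) (hm : (m : ℕ∞) ≤ W.M)
    (hpos : 0 < ntau W m t b + ntau W m t c + m) :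
    |h a - (ntau W m t b : ℝ) /
        ((ntau W m t b : ℝ) + (ntau W m t c : ℝ) + (m : ℝ))| ≤
      K₁ / ((ntau W m t b : ℝ) + (ntau W m t c : ℝ) + (m : ℝ)) := by
  subst hh
  have hB := hreal.hasSum_discrepancyBound hsum
  have hbound := W.abs_mul_sub_le hreal.1 hdb hdc hsb hsc hbc (hitProb_left b c)
    (hitProb_right hbc) hlim (fun u hub huc => sum_sub_hitProb_eq_zero hreal hub huc) hB.summable
    (hitProb_mem_Icc hreal b c) hm t
  rw [hB.tsum_eq, ← hK₁] at hbound
  have hS : (0 : ℝ) < ntau W m t b + ntau W m t c + m := by exact_mod_cast hpos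
  rw [← mul_div_cancel_left₀ (hitProb p b c a) hS.ne', ← sub_div, abs_div, abs_of_pos hS]
  exact div_le_div_of_nonneg_right hbound hS.le

/-- **Transfinite walks and hitting probabilities** (Theorem `hit-prob-tf`). -/
theorem transfinite_hitting_prob {V : Type*} [Countable V]
    (d : V → ℕ) (succ : V → ℕ → V) (p : V → V → ℝ)
    (hreal : Realizes d succ p) (hirr : IrreducibleKernel p)
    (a b c : V) (hbc : b ≠ c) (hab : a ≠ b) (hac : a ≠ c)
    (hpb : p b a = 1) (hpc : p c a = 1)
    (hdb : d b = 1) (hdc : d c = 1) (hsb : succ b 0 = a) (hsc : succ c 0 = a)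
    (h : V → ℝ) (hh : h = hitProb p b c)
    (hlim : Filter.Tendsto h Filter.cofinite (nhds 0))
    (K₁ : ℝ)
    (hsum : Summable fun uv : V × V =>
      if uv.1 = b ∨ uv.1 = c then 0
      else (d uv.1 : ℝ) * p uv.1 uv.2 * |h uv.1 - h uv.2|)
    (hK₁ : K₁ = 1 + (1 / 2) * ∑' uv : V × V,
      if uv.1 = b ∨ uv.1 = c then 0
      else (d uv.1 : ℝ) * p uv.1 uv.2 * |h uv.1 - h uv.2|)
    (W : TransRW d succ a)
    (m t : ℕ) (hm : (m : ℕ∞) ≤ W.M)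
    (hpos : 0 < ntau W m t b + ntau W m t c + m) :
    |h a - (ntau W m t b : ℝ) /
        ((ntau W m t b : ℝ) + (ntau W m t c : ℝ) + (m : ℝ))| ≤
      K₁ / ((ntau W m t b : ℝ) + (ntau W m t c : ℝ) + (m : ℝ)) :=
  transfinite_hitting_prob_general d succ p hreal a b c hbc hdb hdc hsb hsc h hh hlim K₁ hsum hK₁ W
    m t hm hpos
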